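/- Let n ≥ 1, let P be an n×n real matrix and y ∈ ℝⁿ. For each i, j define ψ_{ij} : ℝ × ℝ → ℝ by ψ_{ij}(u,v) = −P_{ij}·u·v for j ≠ i and ψ_{ii}(u,v) = −(1/2)(P_{ii} − 1)·u². Then for every i, the derivative at y_i of the function u ↦ ψ_{ij}(u, y_j) equals −P_{ij} y_j for j ≠ i and −(P_{ii} − 1) y_i for j = i, and the synchronous gradient-descent update y_i′ = y_i − Σ_{j=1}^n (d/du) ψ_{ij}(u, y_j)|_{u = y_i} satisfies y_i′ = Σ_{j=1}^n P_{ij} y_j = (P y)_i for every i; that is, y′ = P y. -/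

import Mathlib

/-- The DeGroot pairwise potentials: `ψ_{ij}(u,v) = −P_{ij}·u·v` for `j ≠ i`
and `ψ_{ii}(u,v) = −(1/2)(P_{ii} − 1)·u²`. -/
noncomputable def degrootPsi {n : ℕ} (P : Matrix (Fin n) (Fin n) ℝ)
    (i j : Fin n) (u v : ℝ) : ℝ :=
  if j = i then -(1/2) * (P i i - 1) * u ^ 2 else -(P i j) * u * v

section

variable {n : ℕ} (P : Matrix (Fin n) (Fin n) ℝ)

theorem hasDerivAt_degrootPsi (i j : Fin n) (u v : ℝ) :
    HasDerivAt (fun u => degrootPsi P i j u v)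
      (if j = i then -((P i i - 1) * u) else -(P i j * v)) u := by
  unfold degrootPsi
  split_ifs
  · exact ((hasDerivAt_pow 2 u).const_mul _).congr_deriv (by push_cast; ring)
  · exact ((hasDerivAt_id u).const_mul _).mul_const v |>.congr_deriv (by simp)

theorem deriv_degrootPsi (i j : Fin n) (u v : ℝ) :
    deriv (fun u => degrootPsi P i j u v) u =
      if j = i then -((P i i - 1) * u) else -(P i j * v) :=
  (hasDerivAt_degrootPsi P i j u v).deriv

theorem sum_degroot_gradient (y : Fin n → ℝ) (i : Fin n) :
    ∑ j, (if j = i then -((P i i - 1) * y i) else -(P i j * y j)) = y i - P.mulVec y i := by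
  -- the summand is `((1 - P) y)_i` split into its identity and `P` parts
  have hterm : ∀ j, (if j = i then -((P i i - 1) * y i) else -(P i j * y j)) =
      (Pi.single i (y i) : Fin n → ℝ) j - P i j * y j := by
    intro j
    by_cases h : j = i
    · subst h; simp; ring
    · simp [h]
  simp only [hterm, Finset.sum_sub_distrib, Finset.sum_pi_single', Finset.mem_univ, if_true,
    Matrix.mulVec, dotProduct]

end

theorem degroot_embedding_general (n : ℕ) (P : Matrix (Fin n) (Fin n) ℝ)
    (y : Fin n → ℝ) :
    (∀ i j : Fin n, deriv (fun u => degrootPsi P i j u (y j)) (y i) =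
      if j = i then -((P i i - 1) * y i) else -(P i j * y j)) ∧
    (∀ i : Fin n,
      y i - ∑ j : Fin n, deriv (fun u => degrootPsi P i j u (y j)) (y i) =
        P.mulVec y i) := by
  refine ⟨fun i j => deriv_degrootPsi P i j (y i) (y j), fun i => ?_⟩
  simp only [deriv_degrootPsi, sum_degroot_gradient, sub_sub_cancel]

/-- The DeGroot model is a special case of the energy-based model: the partial
derivatives of the chosen potentials are `−P_{ij} y_j` (and `−(P_{ii}−1) y_i`
on the diagonal), and one synchronous gradient-descent step reproduces the
DeGroot update `y′ = P y`. -/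
theorem degroot_embedding (n : ℕ) (hn : 1 ≤ n) (P : Matrix (Fin n) (Fin n) ℝ)
    (y : Fin n → ℝ) :
    (∀ i j : Fin n, deriv (fun u => degrootPsi P i j u (y j)) (y i) =
      if j = i then -((P i i - 1) * y i) else -(P i j * y j)) ∧
    (∀ i : Fin n,
      y i - ∑ j : Fin n, deriv (fun u => degrootPsi P i j u (y j)) (y i) =
        P.mulVec y i) :=
  degroot_embedding_general n P y
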